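/- arXiv:1511.01035 — 3 statements merged into one kernel-verified Lean document; each statement's English description precedes it below -/
import Mathlib

section
/- For every finite simple graph G on n ≥ 2 vertices, there exists a finite simple graph G' on n vertices with no isolated vertices such that |A(G')| ≥ |A(G)|. Consequently, among all graphs on n vertices, the maximum of |A(G)| is attained by a graph without isolated vertices. -/
noncomputable def gdeg {n : ℕ} (G : SimpleGraph (Fin n)) (v : Fin n) : ℕ :=
  letI := Classical.decRel G.Adj
  G.degree v

noncomputable def jdv {n : ℕ} (G : SimpleGraph (Fin n)) (i k : ℕ) : ℕ :=
  Set.ncard {e ∈ G.edgeSet | Sym2.map (gdeg G) e = s(i, k)}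

noncomputable def jdvSupport {n : ℕ} (G : SimpleGraph (Fin n)) : Finset (ℕ × ℕ) :=
  (Finset.Icc 1 (n - 1) ×ˢ Finset.Icc 1 (n - 1)).filter
    (fun p => p.1 ≤ p.2 ∧ 0 < jdv G p.1 p.2)

noncomputable def degCount {n : ℕ} (G : SimpleGraph (Fin n)) (i : ℕ) : ℕ :=
  Set.ncard {v : Fin n | gdeg G v = i}

/-! If `G` has an isolated vertex `v`, join `v` to every other vertex. Every other vertex gains
exactly one neighbour and `v` gets degree `n - 1 ≥ 1`, so the new graph has no isolated vertex, and
each edge of `G` with end degrees `(i, k)` becomes an edge with end degrees `(i + 1, k + 1)`. Hence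
`(i, k) ↦ (i + 1, k + 1)` injects `A(G)` into `A(G')`. Applied to a maximiser of `|A|`, this gives
a maximiser without isolated vertices. -/

open Finset

namespace SimpleGraph

variable {V : Type*} (v : V)

def starAt : SimpleGraph V := fromRel fun a _ => a = v

@[simp]
theorem starAt_adj {a b : V} : (starAt v).Adj a b ↔ a ≠ b ∧ (a = v ∨ b = v) := Iff.rfl

variable [DecidableEq V]

instance : DecidableRel (starAt v).Adj := fun _ _ => decidable_of_iff' _ (starAt_adj v)

variable [Fintype V]

theorem neighborFinset_starAt_self : (starAt v).neighborFinset v = {v}ᶜ := by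
  ext; simp [eq_comm]

theorem neighborFinset_starAt_of_ne {w : V} (hw : w ≠ v) :
    (starAt v).neighborFinset w = {v} := by
  ext u; simp only [mem_neighborFinset, starAt_adj, mem_singleton]
  constructor
  · rintro ⟨-, h | h⟩
    exacts [absurd h hw, h]
  · rintro rfl; exact ⟨hw, .inr rfl⟩

variable {G : SimpleGraph V} [DecidableRel G.Adj] {v}

theorem degree_sup_starAt_self (hv : G.IsIsolated v) :
    (G ⊔ starAt v).degree v = Fintype.card V - 1 := by
  rw [← card_neighborFinset_eq_degree, neighborFinset_sup, hv.neighborFinset_eq_empty,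
    neighborFinset_starAt_self, empty_union, card_compl, card_singleton]

theorem degree_sup_starAt_of_ne (hv : G.IsIsolated v) {w : V} (hw : w ≠ v) :
    (G ⊔ starAt v).degree w = G.degree w + 1 := by
  have hvw : v ∉ G.neighborFinset w := fun h => hv w ((G.mem_neighborFinset w v).1 h).symm
  rw [← card_neighborFinset_eq_degree, neighborFinset_sup, neighborFinset_starAt_of_ne v hw,
    union_singleton, card_insert_of_notMem hvw, card_neighborFinset_eq_degree]

end SimpleGraph

open SimpleGraph

variable {n : ℕ} {G G' : SimpleGraph (Fin n)}

theorem gdeg_eq_degree [DecidableRel G.Adj] (v : Fin n) : gdeg G v = G.degree v := by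
  simp only [gdeg]; convert rfl

theorem gdeg_eq_zero_iff {v : Fin n} : gdeg G v = 0 ↔ G.IsIsolated v := by
  classical rw [gdeg_eq_degree, degree_eq_zero]

theorem gdeg_lt (v : Fin n) : gdeg G v < n := by
  classical simpa [gdeg_eq_degree] using G.degree_lt_card_verts v

theorem gdeg_pos_of_adj {x y : Fin n} (h : G.Adj x y) : 0 < gdeg G x :=
  Nat.pos_of_ne_zero fun h0 => gdeg_eq_zero_iff.1 h0 y h

theorem jdv_pos_iff {i k : ℕ} :
    0 < jdv G i k ↔ ∃ x y, G.Adj x y ∧ gdeg G x = i ∧ gdeg G y = k := by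
  rw [jdv, Set.ncard_pos]
  constructor
  · rintro ⟨⟨x, y⟩, hxy, hmap⟩
    rcases Sym2.eq_iff.1 hmap with ⟨hx, hy⟩ | ⟨hx, hy⟩
    exacts [⟨x, y, hxy, hx, hy⟩, ⟨y, x, hxy.symm, hy, hx⟩]
  · rintro ⟨x, y, hxy, rfl, rfl⟩
    exact ⟨s(x, y), hxy, rfl⟩

theorem mem_jdvSupport {p : ℕ × ℕ} :
    p ∈ jdvSupport G ↔ p.1 ≤ p.2 ∧ ∃ x y, G.Adj x y ∧ gdeg G x = p.1 ∧ gdeg G y = p.2 := by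
  obtain ⟨i, k⟩ := p
  simp only [jdvSupport, mem_filter, mem_product, mem_Icc, jdv_pos_iff]
  constructor
  · exact fun h => h.2
  · rintro ⟨hik, x, y, hxy, rfl, rfl⟩
    have hx : gdeg G x < n := gdeg_lt x
    have hy : gdeg G y < n := gdeg_lt y
    exact ⟨⟨⟨gdeg_pos_of_adj hxy, by omega⟩, gdeg_pos_of_adj hxy.symm, by omega⟩,
      hik, x, y, hxy, rfl, rfl⟩

theorem card_jdvSupport_le_of_gdeg_succ (hle : G ≤ G')
    (hdeg : ∀ x, ¬ G.IsIsolated x → gdeg G' x = gdeg G x + 1) :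
    #(jdvSupport G) ≤ #(jdvSupport G') := by
  refine card_le_card_of_injOn (fun p => (p.1 + 1, p.2 + 1)) ?_ ?_
  · rintro ⟨i, k⟩ hp
    obtain ⟨hle12, x, y, hxy, rfl, rfl⟩ := mem_jdvSupport.1 hp
    exact mem_jdvSupport.2 ⟨by simpa using hle12, x, y, hle hxy,
      hdeg x (fun h => h y hxy), hdeg y (fun h => h x hxy.symm)⟩
  · intro p _ q _ h
    simp only [Prod.mk.injEq, Nat.add_right_cancel_iff] at h
    exact Prod.ext h.1 h.2

theorem exists_forall_gdeg_ne_zero_card_jdvSupport_le (hn : 2 ≤ n) (G : SimpleGraph (Fin n)) :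
    ∃ G' : SimpleGraph (Fin n), (∀ v, gdeg G' v ≠ 0) ∧ #(jdvSupport G) ≤ #(jdvSupport G') := by
  by_cases hG : ∃ v, G.IsIsolated v
  swap
  · exact ⟨G, fun v h => hG ⟨v, gdeg_eq_zero_iff.1 h⟩, le_rfl⟩
  obtain ⟨v, hv⟩ := hG
  classical
  have hdeg : ∀ w, w ≠ v → gdeg (G ⊔ starAt v) w = gdeg G w + 1 := fun w hw => by
    rw [gdeg_eq_degree, gdeg_eq_degree, degree_sup_starAt_of_ne hv hw]
  refine ⟨G ⊔ starAt v, fun w => ?_, card_jdvSupport_le_of_gdeg_succ le_sup_left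
    fun x hx => hdeg x (by rintro rfl; exact hx hv)⟩
  by_cases hw : w = v
  · rw [hw, gdeg_eq_degree, degree_sup_starAt_self hv, Fintype.card_fin]; omega
  · rw [hdeg w hw]; omega

theorem stmt3 (n : ℕ) (hn : 2 ≤ n) :
    (∀ G : SimpleGraph (Fin n), ∃ G' : SimpleGraph (Fin n),
        (∀ v, gdeg G' v ≠ 0) ∧ (jdvSupport G).card ≤ (jdvSupport G').card) ∧
    (∃ Gmax : SimpleGraph (Fin n), (∀ v, gdeg Gmax v ≠ 0) ∧
        ∀ G : SimpleGraph (Fin n), (jdvSupport G).card ≤ (jdvSupport Gmax).card) := by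
  refine ⟨exists_forall_gdeg_ne_zero_card_jdvSupport_le hn, ?_⟩
  obtain ⟨G₀, hG₀⟩ := Finite.exists_max fun G : SimpleGraph (Fin n) => #(jdvSupport G)
  obtain ⟨Gmax, hGmax, hle⟩ := exists_forall_gdeg_ne_zero_card_jdvSupport_le hn G₀
  exact ⟨Gmax, hGmax, fun G => (hG₀ G).trans hle⟩
end

section
/- limsup_{n→∞} α_n ≤ limsup_{n→∞} α_n', where α_n is the optimum of the discrete relaxation and α_n' is the optimum of the continuous relaxation. -/
/-!
A feasible discrete set `A` lies in the triangle `1 ≤ i ≤ j ≤ n - 1`. Its symmetrization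
`B = A ∪ Aᵀ` becomes a continuous competitor when each `(i, j) ∈ B` is replaced by the unit cell
`[i, i + 1) × [j, j + 1)`: since `1 / x ≤ 1 / i` on that cell, `∬ 1 / x` is at most
`∑_{(i,j) ∈ A} (1 / i + 1 / j) ≤ n`, while the area is `|B| ≥ 2 |A| - (n - 1)` because
`A ∩ Aᵀ` consists of diagonal pairs. Comparing the normalizations `C(n, 2)` and `(n - 1)²` gives
`αₙ ≤ αₙ' + 1 / (n - 1)`, and the error term disappears in the `limsup`.
-/

open MeasureTheory

/-- The optimum `αₙ` of the discrete relaxation: the supremum (maximum) of `|A| / C(n,2)` over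
all `A ⊆ Pₙ = {(i,j) : 1 ≤ i ≤ j ≤ n-1}` with `∑_{(k₁,k₂) ∈ A} (k₁+k₂)/(k₁k₂) ≤ n`. -/
noncomputable def alphaDisc (n : ℕ) : ℝ :=
  sSup {r : ℝ | ∃ A : Finset (ℕ × ℕ),
    (∀ p ∈ A, 1 ≤ p.1 ∧ p.1 ≤ p.2 ∧ p.2 ≤ n - 1) ∧
    (∑ p ∈ A, ((p.1 : ℝ) + (p.2 : ℝ)) / ((p.1 : ℝ) * (p.2 : ℝ))) ≤ (n : ℝ) ∧
    r = (A.card : ℝ) / (n.choose 2 : ℝ)}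

/-- The optimum `αₙ'` of the continuous relaxation: the supremum of `μ(A') / (n-1)²` over all
Lebesgue-measurable `A' ⊆ [1,n] × [1,n]` symmetric about the line `y = x` with
`∬_{A'} (1/x) dx dy ≤ n`. -/
noncomputable def alphaCont (n : ℕ) : ℝ :=
  sSup {r : ℝ | ∃ A' : Set (ℝ × ℝ),
    NullMeasurableSet A' (volume : Measure (ℝ × ℝ)) ∧
    A' ⊆ Set.Icc (1 : ℝ) (n : ℝ) ×ˢ Set.Icc (1 : ℝ) (n : ℝ) ∧
    (∀ x y : ℝ, (x, y) ∈ A' ↔ (y, x) ∈ A') ∧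
    (∫ p in A', 1 / p.1 ∂(volume : Measure (ℝ × ℝ))) ≤ (n : ℝ) ∧
    r = ((volume : Measure (ℝ × ℝ)) A').toReal / ((n : ℝ) - 1) ^ 2}

open Set Filter Topology Function

def unitCell (p : ℕ × ℕ) : Set (ℝ × ℝ) := Ico (p.1 : ℝ) (p.1 + 1) ×ˢ Ico (p.2 : ℝ) (p.2 + 1)

lemma measurableSet_unitCell (p : ℕ × ℕ) : MeasurableSet (unitCell p) :=
  measurableSet_Ico.prod measurableSet_Ico

lemma volume_unitCell (p : ℕ × ℕ) : volume (unitCell p) = 1 := by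
  simp [unitCell, Measure.volume_eq_prod, Measure.prod_prod, Real.volume_Ico]

lemma pairwise_disjoint_unitCell : Pairwise (Disjoint on unitCell) := by
  have hIco : Pairwise (Disjoint on fun k : ℕ => Ico (k : ℝ) (k + 1)) := fun k l hkl =>
    disjoint_left.2 fun x hk hl => hkl <|
      (Nat.floor_eq_on_Ico k x hk).symm.trans (Nat.floor_eq_on_Ico l x hl)
  intro p q hpq
  rw [onFun, unitCell, unitCell, Set.disjoint_prod]
  by_cases h₁ : p.1 = q.1
  · exact Or.inr (hIco fun h₂ => hpq (Prod.ext h₁ h₂))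
  · exact Or.inl (hIco h₁)

lemma unitCell_subset_Icc_prod {a b : ℕ} {p : ℕ × ℕ} (hp : p ∈ Finset.Ico a b ×ˢ Finset.Ico a b) :
    unitCell p ⊆ Icc (a : ℝ) b ×ˢ Icc (a : ℝ) b := by
  have hcell : ∀ k ∈ Finset.Ico a b, Ico (k : ℝ) (k + 1) ⊆ Icc a b := fun k hk => by
    obtain ⟨hak, hkb⟩ := Finset.mem_Ico.1 hk
    have hkb' : k + 1 ≤ b := hkb
    exact Ico_subset_Icc_self.trans
      (Icc_subset_Icc (by exact_mod_cast hak) (by exact_mod_cast hkb'))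
  obtain ⟨h₁, h₂⟩ := Finset.mem_product.1 hp
  exact prod_mono (hcell _ h₁) (hcell _ h₂)

lemma norm_inv_fst_le_on_unitCell {p : ℕ × ℕ} (hp : 0 < p.1) :
    ∀ q ∈ unitCell p, ‖q.1⁻¹‖ ≤ (p.1 : ℝ)⁻¹ := by
  rintro q ⟨⟨hq, -⟩, -⟩
  have hp' : (0 : ℝ) < p.1 := by exact_mod_cast hp
  rw [norm_inv, Real.norm_of_nonneg (hp'.le.trans hq)]
  exact inv_anti₀ hp' hq

lemma integrableOn_inv_fst_unitCell {p : ℕ × ℕ} (hp : 0 < p.1) :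
    IntegrableOn (fun q : ℝ × ℝ => q.1⁻¹) (unitCell p) :=
  Measure.integrableOn_of_bounded (by simp [volume_unitCell])
    measurable_fst.inv.aestronglyMeasurable
    ((ae_restrict_iff' (measurableSet_unitCell p)).2
      (ae_of_all _ (norm_inv_fst_le_on_unitCell hp)))

lemma setIntegral_inv_fst_unitCell_le {p : ℕ × ℕ} (hp : 0 < p.1) :
    ∫ q in unitCell p, q.1⁻¹ ≤ (p.1 : ℝ)⁻¹ := by
  have h := norm_setIntegral_le_of_norm_le_const ((volume_unitCell p).trans_lt ENNReal.one_lt_top)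
    (norm_inv_fst_le_on_unitCell hp)
  rw [measureReal_def, volume_unitCell, ENNReal.toReal_one, mul_one] at h
  exact (le_abs_self _).trans (Real.norm_eq_abs _ ▸ h)

lemma volume_biUnion_unitCell (B : Finset (ℕ × ℕ)) :
    volume (⋃ p ∈ B, unitCell p) = B.card := by
  rw [measure_biUnion_finset (pairwise_disjoint_unitCell.set_pairwise _)
    (fun p _ => measurableSet_unitCell p)]
  simp [volume_unitCell]

lemma setIntegral_inv_fst_biUnion_unitCell_le {B : Finset (ℕ × ℕ)} (hB : ∀ p ∈ B, 0 < p.1) :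
    ∫ q in ⋃ p ∈ B, unitCell p, q.1⁻¹ ≤ ∑ p ∈ B, (p.1 : ℝ)⁻¹ := by
  rw [integral_biUnion_finset B (fun p _ => measurableSet_unitCell p)
    (pairwise_disjoint_unitCell.set_pairwise _)
    (fun p hp => integrableOn_inv_fst_unitCell (hB p hp))]
  exact Finset.sum_le_sum fun p hp => setIntegral_inv_fst_unitCell_le (hB p hp)

section Symmetrization

variable {α : Type*} [DecidableEq α]

lemma swap_mem_union_image_swap {A : Finset (α × α)} {p : α × α}
    (hp : p ∈ A ∪ A.image Prod.swap) : p.swap ∈ A ∪ A.image Prod.swap := by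
  rcases Finset.mem_union.1 hp with hp | hp
  · exact Finset.mem_union_right _ (Finset.mem_image_of_mem _ hp)
  · obtain ⟨q, hq, rfl⟩ := Finset.mem_image.1 hp
    exact Finset.mem_union_left _ (by rwa [Prod.swap_swap])

lemma union_image_swap_subset_product {A : Finset (α × α)} {s : Finset α} (hA : A ⊆ s ×ˢ s) :
    A ∪ A.image Prod.swap ⊆ s ×ˢ s := by
  refine Finset.union_subset hA fun p hp => ?_
  obtain ⟨q, hq, rfl⟩ := Finset.mem_image.1 hp
  exact Finset.mem_product.2 (Finset.mem_product.1 (hA hq)).symm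

lemma sum_union_image_swap_le {M : Type*} [AddCommMonoid M] [PartialOrder M]
    [IsOrderedAddMonoid M] (A : Finset (α × α)) {f : α × α → M} (hf : ∀ p, 0 ≤ f p) :
    ∑ p ∈ A ∪ A.image Prod.swap, f p ≤ ∑ p ∈ A, (f p + f p.swap) := by
  rw [Finset.sum_add_distrib, ← Finset.sum_image (fun p _ q _ h => Prod.swap_injective h),
    ← Finset.sum_union_inter]
  exact le_add_of_nonneg_right (Finset.sum_nonneg fun p _ => hf p)

lemma two_mul_card_le_card_union_image_swap [PartialOrder α] {A : Finset (α × α)}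
    (hA : ∀ p ∈ A, p.1 ≤ p.2) :
    2 * A.card ≤ (A ∪ A.image Prod.swap).card + (A.filter fun p => p.1 = p.2).card := by
  have hinter : A ∩ A.image Prod.swap ⊆ A.filter fun p => p.1 = p.2 := by
    intro p hp
    obtain ⟨hpA, hpA'⟩ := Finset.mem_inter.1 hp
    obtain ⟨q, hqA, rfl⟩ := Finset.mem_image.1 hpA'
    exact Finset.mem_filter.2 ⟨hpA, le_antisymm (hA _ hpA) (hA _ hqA)⟩
  have h := Finset.card_union_add_card_inter A (A.image Prod.swap)
  rw [Finset.card_image_of_injective _ Prod.swap_injective] at h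
  have := Finset.card_le_card hinter
  omega

end Symmetrization

lemma div_choose_two_le_of_two_mul_le {n : ℕ} (hn : 2 ≤ n) {a b : ℝ} (ha : 0 ≤ a)
    (hab : 2 * a ≤ b + (n - 1)) :
    a / n.choose 2 ≤ b / ((n : ℝ) - 1) ^ 2 + ((n : ℝ) - 1)⁻¹ := by
  have hn' : (1 : ℝ) < n := by exact_mod_cast hn
  have hpos : (0 : ℝ) < n - 1 := by linarith
  calc a / n.choose 2 = 2 * a / (n * (n - 1)) := by rw [Nat.cast_choose_two]; field_simp
    _ ≤ 2 * a / ((n : ℝ) - 1) ^ 2 := by gcongr; nlinarith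
    _ ≤ (b + (n - 1)) / ((n : ℝ) - 1) ^ 2 := by gcongr
    _ = b / ((n : ℝ) - 1) ^ 2 + ((n : ℝ) - 1)⁻¹ := by field_simp

def alphaDiscSet (n : ℕ) : Set ℝ :=
  {r : ℝ | ∃ A : Finset (ℕ × ℕ),
    (∀ p ∈ A, 1 ≤ p.1 ∧ p.1 ≤ p.2 ∧ p.2 ≤ n - 1) ∧
    (∑ p ∈ A, ((p.1 : ℝ) + (p.2 : ℝ)) / ((p.1 : ℝ) * (p.2 : ℝ))) ≤ (n : ℝ) ∧
    r = (A.card : ℝ) / (n.choose 2 : ℝ)}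

def alphaContSet (n : ℕ) : Set ℝ :=
  {r : ℝ | ∃ A' : Set (ℝ × ℝ),
    NullMeasurableSet A' (volume : Measure (ℝ × ℝ)) ∧
    A' ⊆ Set.Icc (1 : ℝ) (n : ℝ) ×ˢ Set.Icc (1 : ℝ) (n : ℝ) ∧
    (∀ x y : ℝ, (x, y) ∈ A' ↔ (y, x) ∈ A') ∧
    (∫ p in A', 1 / p.1 ∂(volume : Measure (ℝ × ℝ))) ≤ (n : ℝ) ∧
    r = ((volume : Measure (ℝ × ℝ)) A').toReal / ((n : ℝ) - 1) ^ 2}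

lemma alphaDisc_eq_sSup (n : ℕ) : alphaDisc n = sSup (alphaDiscSet n) := rfl

lemma alphaCont_eq_sSup (n : ℕ) : alphaCont n = sSup (alphaContSet n) := rfl

lemma alphaDisc_nonneg (n : ℕ) : 0 ≤ alphaDisc n := by
  rw [alphaDisc_eq_sSup]
  exact Real.sSup_nonneg <| by rintro _ ⟨A, -, -, rfl⟩; positivity

lemma nonneg_of_mem_alphaContSet {n : ℕ} {r : ℝ} (hr : r ∈ alphaContSet n) : 0 ≤ r := by
  obtain ⟨A', -, -, -, -, rfl⟩ := hr
  positivity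

lemma le_one_of_mem_alphaContSet {n : ℕ} {r : ℝ} (hr : r ∈ alphaContSet n) : r ≤ 1 := by
  obtain ⟨A', -, hsub, -, -, rfl⟩ := hr
  have hbox : volume (Icc (1 : ℝ) n ×ˢ Icc (1 : ℝ) n) ≠ ⊤ :=
    (isCompact_Icc.prod isCompact_Icc).measure_ne_top
  have hvol : volume.real A' ≤ max ((n : ℝ) - 1) 0 * max ((n : ℝ) - 1) 0 :=
    calc volume.real A' ≤ volume.real (Icc (1 : ℝ) n ×ˢ Icc (1 : ℝ) n) := measureReal_mono hsub hbox
      _ = _ := by rw [Measure.volume_eq_prod, measureReal_prod_prod, Real.volume_real_Icc]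
  refine div_le_one_of_le₀ (hvol.trans ?_) (sq_nonneg _)
  rcases le_total ((n : ℝ) - 1) 0 with h | h
  · simp [max_eq_right h, sq_nonneg]
  · rw [max_eq_left h, sq]

lemma bddAbove_alphaContSet (n : ℕ) : BddAbove (alphaContSet n) :=
  ⟨1, fun _ => le_one_of_mem_alphaContSet⟩

lemma alphaCont_nonneg (n : ℕ) : 0 ≤ alphaCont n := by
  rw [alphaCont_eq_sSup]
  exact Real.sSup_nonneg fun _ => nonneg_of_mem_alphaContSet

lemma alphaCont_le_one (n : ℕ) : alphaCont n ≤ 1 := by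
  rw [alphaCont_eq_sSup]
  exact Real.sSup_le (fun _ => le_one_of_mem_alphaContSet) zero_le_one

lemma card_div_sq_mem_alphaContSet {n : ℕ} {B : Finset (ℕ × ℕ)}
    (hB : B ⊆ Finset.Ico 1 n ×ˢ Finset.Ico 1 n) (hswap : ∀ p ∈ B, p.swap ∈ B)
    (hsum : ∑ p ∈ B, (p.1 : ℝ)⁻¹ ≤ n) :
    (B.card : ℝ) / ((n : ℝ) - 1) ^ 2 ∈ alphaContSet n := by
  have hpos : ∀ p ∈ B, 0 < p.1 := fun p hp => (Finset.mem_Ico.1 (Finset.mem_product.1 (hB hp)).1).1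
  refine ⟨⋃ p ∈ B, unitCell p,
    (B.measurableSet_biUnion fun p _ => measurableSet_unitCell p).nullMeasurableSet,
    iUnion₂_subset fun p hp => by exact_mod_cast unitCell_subset_Icc_prod (hB hp), ?_, ?_, ?_⟩
  · have hsymm : ∀ x y : ℝ, (x, y) ∈ ⋃ p ∈ B, unitCell p → (y, x) ∈ ⋃ p ∈ B, unitCell p := by
      simp only [mem_iUnion₂]
      rintro x y ⟨p, hp, hx, hy⟩
      exact ⟨p.swap, hswap p hp, hy, hx⟩
    exact fun x y => ⟨hsymm x y, hsymm y x⟩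
  · simp only [one_div]
    exact (setIntegral_inv_fst_biUnion_unitCell_le hpos).trans hsum
  · rw [volume_biUnion_unitCell, ENNReal.toReal_natCast]

lemma le_alphaCont_add_of_mem_alphaDiscSet {n : ℕ} (hn : 2 ≤ n) {r : ℝ}
    (hr : r ∈ alphaDiscSet n) : r ≤ alphaCont n + ((n : ℝ) - 1)⁻¹ := by
  classical
  obtain ⟨A, hA, hsum, rfl⟩ := hr
  set B := A ∪ A.image Prod.swap
  have hbox : A ⊆ Finset.Ico 1 n ×ˢ Finset.Ico 1 n := fun p hp => by
    obtain ⟨h₁, h₂, h₃⟩ := hA p hp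
    simp only [Finset.mem_product, Finset.mem_Ico]
    omega
  have hBsum : ∑ p ∈ B, (p.1 : ℝ)⁻¹ ≤ n := by
    refine (sum_union_image_swap_le A fun p => by positivity).trans (le_of_eq_of_le ?_ hsum)
    refine Finset.sum_congr rfl fun p hp => ?_
    obtain ⟨h₁, h₂, -⟩ := hA p hp
    exact inv_add_inv (Nat.cast_pos.2 h₁).ne' (Nat.cast_pos.2 (h₁.trans h₂)).ne'
  have hdiag : (A.filter fun p => p.1 = p.2).card ≤ n - 1 := by
    refine (Finset.card_le_card_of_injOn Prod.fst (t := Finset.Icc 1 (n - 1)) ?_ ?_).trans (by simp)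
    · intro p hp
      obtain ⟨h₁, h₂, h₃⟩ := hA p (Finset.mem_filter.1 hp).1
      exact Finset.mem_Icc.2 ⟨h₁, h₂.trans h₃⟩
    · intro p hp q hq hpq
      exact Prod.ext hpq ((Finset.mem_filter.1 hp).2.symm.trans (hpq ▸ (Finset.mem_filter.1 hq).2))
  have hcard : 2 * (A.card : ℝ) ≤ B.card + ((n : ℝ) - 1) := by
    rw [← Nat.cast_pred (by omega)]
    exact_mod_cast (two_mul_card_le_card_union_image_swap fun p hp => (hA p hp).2.1).trans
      (Nat.add_le_add_left hdiag _)
  calc (A.card : ℝ) / n.choose 2 ≤ B.card / ((n : ℝ) - 1) ^ 2 + ((n : ℝ) - 1)⁻¹ :=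
        div_choose_two_le_of_two_mul_le hn (by positivity) hcard
    _ ≤ alphaCont n + ((n : ℝ) - 1)⁻¹ := by
        rw [alphaCont_eq_sSup]
        gcongr
        exact le_csSup (bddAbove_alphaContSet n) (card_div_sq_mem_alphaContSet
          (union_image_swap_subset_product hbox) (fun _ => swap_mem_union_image_swap) hBsum)

lemma alphaDisc_le_alphaCont_add {n : ℕ} (hn : 2 ≤ n) :
    alphaDisc n ≤ alphaCont n + ((n : ℝ) - 1)⁻¹ := by
  have hn' : (1 : ℝ) ≤ n := by exact_mod_cast (by omega : 1 ≤ n)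
  rw [alphaDisc_eq_sSup]
  exact Real.sSup_le (fun _ => le_alphaCont_add_of_mem_alphaDiscSet hn)
    (add_nonneg (alphaCont_nonneg n) (inv_nonneg.2 (by linarith)))

lemma limsup_le_limsup_of_le_add_of_tendsto_zero {ι : Type*} {l : Filter ι} [l.NeBot]
    {u v w : ι → ℝ} (h : ∀ᶠ i in l, u i ≤ v i + w i) (hw : Tendsto w l (𝓝 0))
    (hu : IsCoboundedUnder (· ≤ ·) l u) (hv : IsBoundedUnder (· ≤ ·) l v)
    (hv' : IsBoundedUnder (· ≥ ·) l v) :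
    limsup u l ≤ limsup v l :=
  calc limsup u l ≤ limsup (v + w) l :=
        limsup_le_limsup h hu (isBoundedUnder_le_add hv hw.isBoundedUnder_le)
    _ ≤ limsup v l + limsup w l :=
        limsup_add_le hv' hv hw.isCoboundedUnder_le hw.isBoundedUnder_le
    _ = limsup v l := by rw [hw.limsup_eq, add_zero]

theorem stmt8 :
    Filter.limsup (fun n : ℕ => alphaDisc n) Filter.atTop ≤
      Filter.limsup (fun n : ℕ => alphaCont n) Filter.atTop := by
  have hle : ∀ᶠ n : ℕ in atTop, alphaDisc n ≤ alphaCont n + ((n : ℝ) - 1)⁻¹ :=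
    eventually_atTop.2 ⟨2, fun n hn => alphaDisc_le_alphaCont_add hn⟩
  have hw : Tendsto (fun n : ℕ => ((n : ℝ) - 1)⁻¹) atTop (𝓝 0) :=
    (tendsto_atTop_add_const_right _ (-1) tendsto_natCast_atTop_atTop).inv_tendsto_atTop
  exact limsup_le_limsup_of_le_add_of_tendsto_zero hle hw
    (isCoboundedUnder_le_of_le atTop alphaDisc_nonneg)
    (isBoundedUnder_of ⟨1, alphaCont_le_one⟩) (isBoundedUnder_of ⟨0, alphaCont_nonneg⟩)
end

section
/- Let n ≥ 1 be real and c > 0 with nc ≥ 2 and x₁(c) = n/(nc−1) ≥ 1. Then the two-dimensional Lebesgue measure of A_c equals n²·(nc − 2)/(nc) − (2/c²)·log(nc − 1). -/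
/-!
For `x, y > 0` one has `1/x + 1/y ≤ c` iff `c x > 1` and `y ≥ x / (c x - 1)`. Hence `A_c` is the
region over `[x₁, n]` between the graph of `x ↦ x / (c x - 1)` and the line `y = n`, and its area
is `∫_{x₁}^n (n - x / (c x - 1)) dx`. An antiderivative of `x / (c x - 1)` is
`x / c + log (c x - 1) / c²`, and `c x₁ - 1 = 1 / (n c - 1)`.
-/

open MeasureTheory

/-- The sublevel set `A_c = {(x,y) ∈ [1,n]² : 1/x + 1/y ≤ c}`. -/
def Ac (n c : ℝ) : Set (ℝ × ℝ) :=
  {p : ℝ × ℝ | p.1 ∈ Set.Icc 1 n ∧ p.2 ∈ Set.Icc 1 n ∧ 1 / p.1 + 1 / p.2 ≤ c}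

open Set Real

theorem one_div_add_one_div_le_iff {x y c : ℝ} (hx : 0 < x) (hy : 0 < y) :
    1 / x + 1 / y ≤ c ↔ 0 < c * x - 1 ∧ x / (c * x - 1) ≤ y := by
  have hsub : c - 1 / x = (c * x - 1) / x := by field_simp
  rw [← le_sub_iff_add_le', hsub]
  constructor
  · intro h
    have hpos : 0 < c * x - 1 :=
      (div_pos_iff_of_pos_right hx).mp ((one_div_pos.mpr hy).trans_le h)
    exact ⟨hpos, by rwa [one_div_le hy (div_pos hpos hx), one_div_div] at h⟩
  · rintro ⟨hpos, h⟩
    rwa [one_div_le hy (div_pos hpos hx), one_div_div]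

theorem div_mul_sub_one_le_iff {n c x : ℝ} (hn : 0 < n) (hd : 0 < n * c - 1) (hx : 0 < x) :
    n / (n * c - 1) ≤ x ↔ 0 < c * x - 1 ∧ x / (c * x - 1) ≤ n := by
  rw [← one_div_add_one_div_le_iff hx hn, add_comm, one_div_add_one_div_le_iff hn hx,
    mul_comm c n, and_iff_right hd]

theorem Ac_eq_region_between_cc {n c : ℝ} (hnc : 1 < n * c) (hx1 : 1 ≤ n / (n * c - 1)) :
    Ac n c = {p | p.1 ∈ Icc (n / (n * c - 1)) n ∧ p.2 ∈ Icc (p.1 / (c * p.1 - 1)) n} := by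
  have hd : 0 < n * c - 1 := by linarith
  have hn : 0 < n := by linarith [(le_div_iff₀ hd).mp hx1]
  ext ⟨x, y⟩
  simp only [Ac, mem_ofPred_eq, mem_Icc]
  constructor
  · rintro ⟨⟨hx1x, hxn⟩, ⟨hy1, hyn⟩, hxy⟩
    obtain ⟨hpos, hgy⟩ := (one_div_add_one_div_le_iff (by linarith) (by linarith)).mp hxy
    refine ⟨⟨?_, hxn⟩, hgy, hyn⟩
    exact (div_mul_sub_one_le_iff hn hd (by linarith)).mpr ⟨hpos, hgy.trans hyn⟩
  · rintro ⟨⟨hx₁x, hxn⟩, hgy, hyn⟩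
    have hx : 0 < x := by linarith
    have hpos := ((div_mul_sub_one_le_iff hn hd hx).mp hx₁x).1
    -- `x ↦ x / (c x - 1)` is decreasing and equals `x₁ ≥ 1` at `n`
    have hgn : n / (n * c - 1) ≤ x / (c * x - 1) := by
      rw [div_le_div_iff₀ hd hpos]; nlinarith
    refine ⟨⟨by linarith, hxn⟩, ⟨by linarith, hyn⟩, ?_⟩
    exact (one_div_add_one_div_le_iff hx (by linarith)).mpr ⟨hpos, hgy⟩

theorem measure_region_between_cc_eq_lintegral {α : Type*} [MeasurableSpace α] {μ : Measure α}
    {f g : α → ℝ} {s : Set α} (hf : Measurable f) (hg : Measurable g) (hs : MeasurableSet s) :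
    μ.prod volume {p : α × ℝ | p.1 ∈ s ∧ p.2 ∈ Icc (f p.1) (g p.1)} =
      ∫⁻ x in s, ENNReal.ofReal (g x - f x) ∂μ := by
  rw [Measure.prod_apply (measurableSet_region_between_cc hf hg hs), ← lintegral_indicator hs]
  congr 1
  funext x
  by_cases hx : x ∈ s
  · rw [indicator_of_mem hx, ← Real.volume_Icc]
    congr 1
    ext y
    simp [hx]
  · simp [hx]

theorem measure_region_between_cc_eq_integral {α : Type*} [MeasurableSpace α] {μ : Measure α}
    {f g : α → ℝ} {s : Set α} (hf : Measurable f) (hg : Measurable g) (hs : MeasurableSet s)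
    (hint : IntegrableOn (fun x => g x - f x) s μ) (hfg : ∀ x ∈ s, f x ≤ g x) :
    μ.prod volume {p : α × ℝ | p.1 ∈ s ∧ p.2 ∈ Icc (f p.1) (g p.1)} =
      ENNReal.ofReal (∫ x in s, g x - f x ∂μ) := by
  rw [measure_region_between_cc_eq_lintegral hf hg hs, ofReal_integral_eq_lintegral_ofReal hint]
  exact (ae_restrict_iff' hs).mpr (.of_forall fun x hx => sub_nonneg.mpr (hfg x hx))

theorem hasDerivAt_div_add_log_mul_sub_one {c x : ℝ} (hc : c ≠ 0) (hx : c * x - 1 ≠ 0) :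
    HasDerivAt (fun x => x / c + log (c * x - 1) / c ^ 2) (x / (c * x - 1)) x := by
  have h := ((hasDerivAt_id x).div_const c).add
    ((((hasDerivAt_id x).const_mul c).sub_const 1).log hx |>.div_const (c ^ 2))
  refine h.congr_deriv ?_
  simp only [id]
  field_simp
  ring

theorem integral_div_mul_sub_one {a b c : ℝ} (hc : c ≠ 0) (h : ∀ x ∈ uIcc a b, c * x - 1 ≠ 0) :
    ∫ x in a..b, x / (c * x - 1) = (b - a) / c + (log (c * b - 1) - log (c * a - 1)) / c ^ 2 := by
  rw [intervalIntegral.integral_eq_sub_of_hasDerivAt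
    (fun x hx => hasDerivAt_div_add_log_mul_sub_one hc (h x hx))
    (continuousOn_id.div (by fun_prop) h).intervalIntegrable]
  ring

theorem volume_Ac_toReal_eq_integral {n c : ℝ} (hnc : 2 ≤ n * c) (hx1 : 1 ≤ n / (n * c - 1)) :
    (volume (Ac n c)).toReal = ∫ x in n / (n * c - 1)..n, (n - x / (c * x - 1)) := by
  have hd : 1 ≤ n * c - 1 := by linarith
  have hn : 0 < n := by linarith [(le_div_iff₀ (by linarith : (0:ℝ) < n * c - 1)).mp hx1]
  have hx₁n : n / (n * c - 1) ≤ n := div_le_self hn.le hd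
  have hg : ∀ x ∈ Icc (n / (n * c - 1)) n, 0 < c * x - 1 ∧ x / (c * x - 1) ≤ n := fun x hx =>
    (div_mul_sub_one_le_iff hn (by linarith) (by linarith [hx.1])).mp hx.1
  have hg_cont : ContinuousOn (fun x => x / (c * x - 1)) (Icc (n / (n * c - 1)) n) :=
    continuousOn_id.div (by fun_prop) fun x hx => (hg x hx).1.ne'
  rw [Ac_eq_region_between_cc (by linarith) hx1, Measure.volume_eq_prod,
    measure_region_between_cc_eq_integral (by fun_prop) measurable_const measurableSet_Icc
      (continuousOn_const.sub hg_cont).integrableOn_Icc fun x hx => (hg x hx).2,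
    integral_Icc_eq_integral_Ioc, ← intervalIntegral.integral_of_le hx₁n, ENNReal.toReal_ofReal]
  exact intervalIntegral.integral_nonneg hx₁n fun x hx => sub_nonneg.mpr (hg x hx).2

theorem stmt14_general (n c : ℝ) (hnc : 2 ≤ n * c)
    (hx1 : 1 ≤ n / (n * c - 1)) :
    ((volume : Measure (ℝ × ℝ)) (Ac n c)).toReal =
      n ^ 2 * (n * c - 2) / (n * c) - (2 / c ^ 2) * Real.log (n * c - 1) := by
  have hd : 1 ≤ n * c - 1 := by linarith
  have hn : 0 < n := by linarith [(le_div_iff₀ (by linarith : (0:ℝ) < n * c - 1)).mp hx1]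
  have hc : c ≠ 0 := by rintro rfl; linarith
  have hpos : ∀ x ∈ uIcc (n / (n * c - 1)) n, c * x - 1 ≠ 0 := by
    rw [uIcc_of_le (div_le_self hn.le hd)]
    exact fun x hx => ((div_mul_sub_one_le_iff hn (by linarith) (by linarith [hx.1])).mp hx.1).1.ne'
  have hcx₁ : c * (n / (n * c - 1)) - 1 = (n * c - 1)⁻¹ := by
    rw [mul_div_assoc', div_sub_one (by positivity), inv_eq_one_div]
    ring
  have hg_int : IntervalIntegrable (fun x => x / (c * x - 1)) volume (n / (n * c - 1)) n :=
    (continuousOn_id.div (by fun_prop) hpos).intervalIntegrable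
  rw [volume_Ac_toReal_eq_integral hnc hx1,
    intervalIntegral.integral_sub intervalIntegrable_const hg_int,
    intervalIntegral.integral_const, integral_div_mul_sub_one hc hpos, smul_eq_mul, hcx₁, log_inv,
    mul_comm c n]
  have hd0 : n * c - 1 ≠ 0 := by positivity
  field_simp
  ring

theorem stmt14 (n c : ℝ) (hn : 1 ≤ n) (hc : 0 < c) (hnc : 2 ≤ n * c)
    (hx1 : 1 ≤ n / (n * c - 1)) :
    ((volume : Measure (ℝ × ℝ)) (Ac n c)).toReal =
      n ^ 2 * (n * c - 2) / (n * c) - (2 / c ^ 2) * Real.log (n * c - 1) :=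
  stmt14_general n c hnc hx1
end
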